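/- arXiv:2203.03404 — 6 statements merged into one kernel-verified Lean document; each statement's English description precedes it below -/
import Mathlib

section
/- There exists a constant c ∈ ℕ such that for every deterministic weak Muller automaton 𝔄 with k states over an alphabet of the form Σ_I × Σ_O, the following are equivalent: (i) Player O wins the delay game Γ_f(L(𝔄)) for some constant delay function f with f(0) ≤ 2^(2^(c·k)); (ii) Player O wins Γ_g(L(𝔄)) for some delay function g. (That is, doubly-exponential constant lookahead in the number of states is sufficient whenever any lookahead suffices.) -/
universe u

namespace DelayGames

/-- A delay function maps each round to a positive number of letters. -/
def IsDelay (f : ℕ → ℕ) : Prop := ∀ i, 1 ≤ f i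

/-- A delay function is constant if it is `1` from round `1` on. -/
def IsConstantDelay (f : ℕ → ℕ) : Prop := ∀ i, 0 < i → f i = 1

/-- `α` is the flattening (concatenation) of the sequence of finite blocks `u`:
every finite concatenation of the first `i` blocks is the corresponding prefix of `α`. -/
def Flattens {σ : Type*} (u : ℕ → List σ) (α : ℕ → σ) : Prop :=
  ∀ i, (List.range i).flatMap u =
    (List.range ((List.range i).flatMap u).length).map α

/-- Player O wins the delay game with delay function `f` and winning condition `L`:
she has a strategy (mapping the input letters produced so far to an output letter)
such that every consistent play has its outcome in `L`. -/
def OWins {σI σO : Type*} (f : ℕ → ℕ) (L : Set (ℕ → σI × σO)) : Prop :=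
  ∃ τO : List σI → σO,
    ∀ (u : ℕ → List σI) (v : ℕ → σO),
      (∀ i, (u i).length = f i) →
      (∀ i, v i = τO ((List.range (i + 1)).flatMap u)) →
      ∀ α : ℕ → σI, Flattens u α → (fun n => (α n, v n)) ∈ L

/-- Player I wins the delay game with delay function `f` and winning condition `L`:
he has a strategy (mapping the output letters produced so far to a block of input
letters of the prescribed length) such that no consistent play has its outcome in `L`. -/
def IWins {σI σO : Type*} (f : ℕ → ℕ) (L : Set (ℕ → σI × σO)) : Prop :=
  ∃ τI : List σO → List σI,
    (∀ w, (τI w).length = f w.length) ∧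
    ∀ (u : ℕ → List σI) (v : ℕ → σO),
      (∀ i, u i = τI ((List.range i).map v)) →
      ∀ α : ℕ → σI, Flattens u α → (fun n => (α n, v n)) ∉ L

/-- A deterministic weak Muller automaton (state type `Q`, alphabet `σ`). -/
structure WDMA (Q σ : Type*) where
  init : Q
  step : Q → σ → Q
  acc : Set (Set Q)

/-- The unique run of a deterministic automaton on an infinite word. -/
def WDMA.run {Q σ : Type*} (A : WDMA Q σ) (α : ℕ → σ) : ℕ → Q
  | 0 => A.init
  | n + 1 => A.step (WDMA.run A α n) (α n)

/-- A wDMA accepts iff the occurrence set of the run is in the acceptance family. -/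
def WDMA.language {Q σ : Type*} (A : WDMA Q σ) : Set (ℕ → σ) :=
  {α | Set.range (A.run α) ∈ A.acc}

/-- A non-deterministic weak Muller automaton. -/
structure WNMA (Q σ : Type*) where
  init : Q
  trans : Set (Q × σ × Q)
  acc : Set (Set Q)

/-- A wNMA accepts iff some initial run processing the word has its occurrence set
in the acceptance family. -/
def WNMA.language {Q σ : Type*} (A : WNMA Q σ) : Set (ℕ → σ) :=
  {α | ∃ ρ : ℕ → Q, ρ 0 = A.init ∧
    (∀ n, (ρ n, α n, ρ (n + 1)) ∈ A.trans) ∧ Set.range ρ ∈ A.acc}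

/-- Boolean formulas over variables in `Q` (Emerson-Lei conditions). -/
inductive BForm (Q : Type u) : Type u where
  | var : Q → BForm Q
  | not : BForm Q → BForm Q
  | and : BForm Q → BForm Q → BForm Q
  | or : BForm Q → BForm Q → BForm Q

/-- Evaluation of a Boolean formula under a valuation. -/
def BForm.eval {Q : Type*} (v : Q → Prop) : BForm Q → Prop
  | .var q => v q
  | .not φ => ¬ BForm.eval v φ
  | .and φ ψ => BForm.eval v φ ∧ BForm.eval v ψ
  | .or φ ψ => BForm.eval v φ ∨ BForm.eval v ψ

/-- The length of a Boolean formula. -/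
def BForm.size {Q : Type*} : BForm Q → ℕ
  | .var _ => 1
  | .not φ => BForm.size φ + 1
  | .and φ ψ => BForm.size φ + BForm.size ψ + 1
  | .or φ ψ => BForm.size φ + BForm.size ψ + 1

/-- The family `𝓕_φ` of sets of states whose characteristic valuation satisfies `φ`. -/
def BForm.models {Q : Type*} (φ : BForm Q) : Set (Set Q) :=
  {F | BForm.eval (fun q => q ∈ F) φ}

/-- The set of states visited infinitely often by a run. -/
def InfOcc {Q : Type*} (ρ : ℕ → Q) : Set Q := {q | ∀ N, ∃ n, N ≤ n ∧ ρ n = q}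

/-- A deterministic parity automaton. -/
structure DPA (Q σ : Type*) where
  init : Q
  step : Q → σ → Q
  color : Q → ℕ

def DPA.run {Q σ : Type*} (A : DPA Q σ) (α : ℕ → σ) : ℕ → Q
  | 0 => A.init
  | n + 1 => A.step (DPA.run A α n) (α n)

/-- A DPA accepts iff the maximal color visited infinitely often by the run is even. -/
def DPA.language {Q σ : Type*} (A : DPA Q σ) : Set (ℕ → σ) :=
  {α | ∃ q ∈ InfOcc (A.run α), Even (A.color q) ∧
    ∀ q' ∈ InfOcc (A.run α), A.color q' ≤ A.color q}

/-- A non-deterministic parity automaton. -/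
structure NPA (Q σ : Type*) where
  init : Q
  trans : Set (Q × σ × Q)
  color : Q → ℕ

/-- An NPA accepts iff some initial run processing the word is such that the maximal
color it visits infinitely often is even. -/
def NPA.language {Q σ : Type*} (A : NPA Q σ) : Set (ℕ → σ) :=
  {α | ∃ ρ : ℕ → Q, ρ 0 = A.init ∧
    (∀ n, (ρ n, α n, ρ (n + 1)) ∈ A.trans) ∧
    ∃ q ∈ InfOcc ρ, Even (A.color q) ∧ ∀ q' ∈ InfOcc ρ, A.color q' ≤ A.color q}

/-- A finite word contains a bad `j`-pair. -/
def ListBadPair (w : List ℕ) (j : ℕ) : Prop :=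
  ∃ p p', p < p' ∧ p' < w.length ∧ w.getD p 0 = j ∧ w.getD p' 0 = j ∧
    ∀ q, p < q → q < p' → w.getD q 0 < j

/-- An infinite word contains a bad `j`-pair. -/
def InfBadPair (α : ℕ → ℕ) (j : ℕ) : Prop :=
  ∃ p p', p < p' ∧ α p = j ∧ α p' = j ∧ ∀ q, p < q → q < p' → α q < j

/-- The winning condition `P_n`: `(α, β)` belongs to it iff `α(1)α(2)⋯` contains a
bad `β(0)`-pair. -/
def P (n : ℕ) : Set (ℕ → Fin n × Fin n) :=
  {w | InfBadPair (fun k => ((w (k + 1)).1 : ℕ)) ((w 0).2 : ℕ)}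

/-- The `k`-th bit of the binary representation of `x`. -/
def bit (x k : ℕ) : ℕ := x / 2 ^ k % 2


/-!
Alongside the current state, track the set of states visited so far: a weak Muller automaton
accepts according to the limit of that set. The behaviour of an input word records which such
pairs lead to which, over all answers of Player O; there are at most `2 ^ 2 ^ (4 * k)` of them,
so by pumping, every longer word has the behaviour of arbitrarily long words. Player O's winning
strategy with arbitrary lookahead then wins a block game in which Player I plays behaviours, once
each block is replaced by a long enough word of that behaviour. Conversely, cutting the actual
input into blocks of length `n0`, one more than the number of behaviours, Player O can play the
block game with a lookahead of two blocks and realize each of her moves there letter by letter.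
-/

open List

lemma map_range_add {σ : Type*} (f : ℕ → σ) (a b : ℕ) :
    (range (a + b)).map f = (range a).map f ++ (range b).map fun r => f (a + r) := by
  rw [range_add, map_append, map_map]
  rfl

lemma exists_map_range_eq_of_isPrefix {σ : Type*} {w : ℕ → List σ}
    (hw : ∀ j, w j <+: w (j + 1)) (hlen : ∀ j, j ≤ (w j).length) :
    ∃ α : ℕ → σ, ∀ j, w j = (range (w j).length).map α := by
  have hmono : ∀ {i j}, i ≤ j → w i <+: w j := fun h =>
    Nat.le_induction (prefix_refl _) (fun n _ ih => ih.trans (hw n)) _ h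
  refine ⟨fun n => (w (n + 1))[n]'(hlen (n + 1)), fun j => ext_getElem (by simp) fun t ht _ => ?_⟩
  rw [getElem_map, getElem_range]
  rcases le_total j (t + 1) with h | h
  · exact (hmono h).getElem ht
  · exact ((hmono h).getElem _).symm

lemma card_set_eq_two_pow (X : Type*) [Finite X] : Nat.card (Set X) = 2 ^ Nat.card X := by
  rw [show Nat.card (Set X) = Nat.card (X → Prop) from rfl, Nat.card_fun,
    Nat.card_eq_fintype_card (α := Prop), Fintype.card_prop]

section Plays

variable {σI σO : Type*}

/-- The number of input letters available to Player O when she picks her `n`-th letter. -/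
def lookahead (g : ℕ → ℕ) (n : ℕ) : ℕ := ∑ i ∈ Finset.range (n + 1), g i

lemma lt_lookahead {g : ℕ → ℕ} (hg : IsDelay g) (n : ℕ) : n < lookahead g n := by
  calc n < ∑ _ ∈ Finset.range (n + 1), 1 := by simp
    _ ≤ lookahead g n := Finset.sum_le_sum fun i _ => hg i

lemma lookahead_mono (g : ℕ → ℕ) : Monotone (lookahead g) := fun _ _ h =>
  Finset.sum_le_sum_of_subset (Finset.range_subset_range.2 (Nat.succ_le_succ h))

lemma lookahead_ite_zero (d n : ℕ) :
    lookahead (fun i => if i = 0 then d else 1) n = d + n := by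
  simp [lookahead, Finset.sum_range_succ', add_comm]

def lookaheadPlay (τ : List σI → σO) (F : ℕ → ℕ) (α : ℕ → σI) : ℕ → σI × σO :=
  fun n => (α n, τ ((range (F n)).map α))

def cut (g : ℕ → ℕ) (α : ℕ → σI) (i : ℕ) : List σI :=
  (range (g i)).map fun r => α (∑ j ∈ Finset.range i, g j + r)

lemma flatMap_range_cut (g : ℕ → ℕ) (α : ℕ → σI) (n : ℕ) :
    (range n).flatMap (cut g α) = (range (∑ j ∈ Finset.range n, g j)).map α := by
  induction n with
  | zero => rfl
  | succ n ih =>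
    rw [range_succ, flatMap_append, ih, Finset.sum_range_succ, map_range_add]
    simp [cut]

lemma length_flatMap_range {g : ℕ → ℕ} {u : ℕ → List σI} (hu : ∀ i, (u i).length = g i)
    (n : ℕ) : ((range n).flatMap u).length = ∑ j ∈ Finset.range n, g j := by
  induction n with
  | zero => rfl
  | succ n ih => simp [range_succ, Finset.sum_range_succ, ih, hu]

theorem oWins_iff_exists_lookaheadPlay_mem (g : ℕ → ℕ) (L : Set (ℕ → σI × σO)) :
    OWins g L ↔ ∃ τ : List σI → σO, ∀ α, lookaheadPlay τ (lookahead g) α ∈ L := by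
  constructor
  · rintro ⟨τ, hτ⟩
    refine ⟨τ, fun α => ?_⟩
    have hα : Flattens (cut g α) α := fun i => by
      rw [flatMap_range_cut, length_map, length_range]
    have h := hτ (cut g α) _ (fun i => by simp [cut]) (fun _ => rfl) α hα
    simp only [flatMap_range_cut] at h
    exact h
  · rintro ⟨τ, hτ⟩
    refine ⟨τ, fun u v hu hv α hα => ?_⟩
    convert hτ α using 1
    funext n
    rw [hv, hα (n + 1), length_flatMap_range hu]
    rfl

def finitePlay (τ : List σI → σO) (F : ℕ → ℕ) (w : List σI) (n : ℕ) : List (σI × σO) :=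
  (w.take n).zip ((range n).map fun t => τ (w.take (F t)))

lemma finitePlay_map_range (τ : List σI → σO) {F : ℕ → ℕ} {α : ℕ → σI} {m n : ℕ}
    (hn : n ≤ m) (hF : ∀ t < n, F t ≤ m) :
    finitePlay τ F ((range m).map α) n = (range n).map (lookaheadPlay τ F α) := by
  have htake : ∀ {k}, k ≤ m → ((range m).map α).take k = (range k).map α := fun hk => by
    rw [← map_take, take_range, min_eq_left hk]
  rw [finitePlay, htake hn, ← zip_map']
  congr 1
  exact map_congr_left fun t ht => by rw [htake (hF t (mem_range.1 ht))]; rfl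

def block (n0 : ℕ) (w : List σI) (s : ℕ) : List σI := (w.drop (s * n0)).take n0

def streamBlock (α : ℕ → σI) (n0 s : ℕ) : List σI := (range n0).map fun r => α (s * n0 + r)

lemma block_map_range {α : ℕ → σI} {n0 m s : ℕ} (h : (s + 1) * n0 ≤ m) :
    block n0 ((range m).map α) s = streamBlock α n0 s := by
  obtain ⟨k, rfl⟩ : ∃ k, m = s * n0 + (n0 + k) :=
    ⟨m - (s + 1) * n0, by rw [add_one_mul] at *; omega⟩
  rw [block, map_range_add, drop_left' (by simp), ← map_take, take_range,
    min_eq_left (by omega)]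
  rfl

end Plays

namespace WDMA

section OccurrenceRun

variable {σ Q : Type*} (A : WDMA Q σ)

def occStep (p : Q × Set Q) (a : σ) : Q × Set Q :=
  (A.step p.1 a, insert (A.step p.1 a) p.2)

def occRun (p : Q × Set Q) (l : List σ) : Q × Set Q := l.foldl A.occStep p

def occInit : Q × Set Q := (A.init, {A.init})

lemma occRun_append (p : Q × Set Q) (l l' : List σ) :
    A.occRun p (l ++ l') = A.occRun (A.occRun p l) l' :=
  foldl_append

lemma occRun_occInit_map_range (γ : ℕ → σ) (n : ℕ) :
    A.occRun A.occInit ((range n).map γ) = (A.run γ n, A.run γ '' Set.Iic n) := by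
  induction n with
  | zero =>
    have h0 : Set.Iic 0 = {0} := by ext; simp
    simp [occRun, occInit, WDMA.run, h0]
  | succ n ih =>
    rw [range_succ, map_append, occRun_append, ih]
    simp only [map_cons, map_nil, occRun, foldl_cons, foldl_nil, occStep]
    refine Prod.ext rfl ?_
    show insert (A.run γ (n + 1)) _ = _
    rw [show Set.Iic (n + 1) = insert (n + 1) (Set.Iic n) from Order.Iic_succ n,
      Set.image_insert_eq]

lemma iUnion_occRun_occInit (γ : ℕ → σ) {t : ℕ → ℕ} (ht : ∀ j, j ≤ t j) :
    ⋃ j, (A.occRun A.occInit ((range (t j)).map γ)).2 = Set.range (A.run γ) := by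
  simp only [occRun_occInit_map_range]
  refine subset_antisymm (Set.iUnion_subset fun j => Set.image_subset_range _ _) ?_
  rintro _ ⟨n, rfl⟩
  exact Set.mem_iUnion.2 ⟨n, n, Set.mem_Iic.2 (ht n), rfl⟩

end OccurrenceRun

end WDMA

abbrev Behaviour (Q : Type*) := Q × Set Q → Set (Q × Set Q)

lemma two_mul_card_behaviour_succ_le (Q : Type*) [Finite Q] [Nonempty Q] :
    2 * (Nat.card (Behaviour Q) + 1) ≤ 2 ^ 2 ^ (5 * Nat.card Q) := by
  set k := Nat.card Q
  have hk : 0 < k := Nat.card_pos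
  have hpair : Nat.card (Q × Set Q) ≤ 2 ^ (2 * k) := by
    rw [Nat.card_prod, card_set_eq_two_pow, two_mul, pow_add]
    exact Nat.mul_le_mul_right _ Nat.lt_two_pow_self.le
  have hcard : Nat.card (Behaviour Q) ≤ 2 ^ 2 ^ (4 * k) := by
    rw [Nat.card_fun, card_set_eq_two_pow, ← pow_mul]
    refine Nat.pow_le_pow_right two_pos ?_
    calc _ ≤ 2 ^ (2 * k) * 2 ^ (2 * k) := Nat.mul_le_mul hpair hpair
      _ = 2 ^ (4 * k) := by rw [← pow_add]; ring_nf
  have hexp : 2 ^ (4 * k) + 2 ≤ 2 ^ (5 * k) := by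
    calc 2 ^ (4 * k) + 2 ≤ 2 ^ (4 * k) * 2 ^ k := by
          nlinarith [Nat.le_self_pow hk.ne' 2, Nat.le_self_pow (by omega : 4 * k ≠ 0) 2]
      _ = 2 ^ (5 * k) := by rw [← pow_add]; ring_nf
  calc 2 * (Nat.card (Behaviour Q) + 1) ≤ 2 ^ (2 ^ (4 * k) + 2) := by
        rw [pow_add]; linarith [Nat.one_le_two_pow (n := 2 ^ (4 * k))]
    _ ≤ 2 ^ 2 ^ (5 * k) := Nat.pow_le_pow_right two_pos hexp

namespace WDMA

section Behaviour

variable {σI σO Q : Type*} (A : WDMA Q (σI × σO))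

def behaviour (w : List σI) : Behaviour Q :=
  fun p => {p' | ∃ y : List σO, y.length = w.length ∧ A.occRun p (w.zip y) = p'}

lemma behaviour_append (w w' : List σI) (p : Q × Set Q) :
    A.behaviour (w ++ w') p = ⋃ p' ∈ A.behaviour w p, A.behaviour w' p' := by
  ext p''
  simp only [behaviour, Set.mem_ofPred_eq, Set.mem_iUnion, exists_prop]
  constructor
  · rintro ⟨y, hy, rfl⟩
    rw [length_append] at hy
    refine ⟨_, ⟨y.take w.length, by simp; omega, rfl⟩, y.drop w.length, by simp; omega, ?_⟩
    rw [← occRun_append, ← zip_append (by simp; omega), take_append_drop]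
  · rintro ⟨_, ⟨y, hy, rfl⟩, y', hy', rfl⟩
    exact ⟨y ++ y', by simp [hy, hy'], by rw [zip_append hy.symm, occRun_append]⟩

lemma behaviour_append_congr {u u' : List σI} (h : A.behaviour u = A.behaviour u')
    (w : List σI) : A.behaviour (u ++ w) = A.behaviour (u' ++ w) := by
  funext p
  rw [behaviour_append, behaviour_append, h]

def IsUnboundedBehaviour (b : Behaviour Q) : Prop :=
  ∀ m, ∃ w : List σI, m ≤ w.length ∧ A.behaviour w = b

open Classical in
noncomputable def longWord (b : Behaviour Q) (m : ℕ) : List σI :=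
  if h : A.IsUnboundedBehaviour b then (h m).choose else []

variable {A}

lemma le_length_longWord {b : Behaviour Q} (hb : A.IsUnboundedBehaviour b) (m : ℕ) :
    m ≤ (A.longWord b m).length := by
  rw [longWord, dif_pos hb]
  exact (hb m).choose_spec.1

lemma behaviour_longWord {b : Behaviour Q} (hb : A.IsUnboundedBehaviour b) (m : ℕ) :
    A.behaviour (A.longWord b m) = b := by
  rw [longWord, dif_pos hb]
  exact (hb m).choose_spec.2

lemma behaviour_append_flatten_replicate {u v : List σI}
    (h : A.behaviour (u ++ v) = A.behaviour u) (r : ℕ) :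
    A.behaviour (u ++ (replicate r v).flatten) = A.behaviour u := by
  induction r with
  | zero => simp
  | succ r ih =>
    rw [replicate_succ', flatten_append, flatten_singleton, ← append_assoc,
      A.behaviour_append_congr ih, h]

lemma exists_behaviour_append_eq [Finite Q] {w : List σI}
    (hw : Nat.card (Behaviour Q) < w.length) :
    ∃ u v z, w = u ++ v ++ z ∧ v ≠ [] ∧ A.behaviour (u ++ v) = A.behaviour u := by
  have hnot : ¬ Function.Injective fun i : Fin (w.length + 1) => A.behaviour (w.take i) :=
    fun hinj => by simpa using (Nat.card_le_card_of_injective _ hinj).trans_lt hw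
  obtain ⟨i, j, heq, hne⟩ := Function.not_injective_iff.1 hnot
  wlog hlt : i < j generalizing i j
  · exact this j i heq.symm hne.symm (lt_of_le_of_ne (not_lt.1 hlt) hne.symm)
  have huv : w.take i ++ (w.drop i).take (j - i) = w.take j := by
    rw [← take_add, Nat.add_sub_cancel' (Fin.le_iff_val_le_val.1 hlt.le)]
  refine ⟨_, _, w.drop j, by rw [huv, take_append_drop], ?_, by rw [huv]; exact heq.symm⟩
  refine ne_nil_of_length_pos ?_
  have := j.isLt
  simp only [length_take, length_drop]
  omega

lemma isUnboundedBehaviour_behaviour [Finite Q] {w : List σI}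
    (hw : Nat.card (Behaviour Q) < w.length) : A.IsUnboundedBehaviour (A.behaviour w) := by
  obtain ⟨u, v, z, rfl, hv, huv⟩ := exists_behaviour_append_eq hw
  intro m
  refine ⟨u ++ (replicate m v).flatten ++ z, ?_, ?_⟩
  · have : m ≤ m * v.length := Nat.le_mul_of_pos_right m (length_pos_iff.2 hv)
    simp [length_flatten, sum_replicate]
    omega
  · rw [A.behaviour_append_congr (behaviour_append_flatten_replicate huv m),
      A.behaviour_append_congr huv]

lemma isUnboundedBehaviour_streamBlock [Finite Q] {n0 : ℕ}
    (hn0 : Nat.card (Behaviour Q) < n0) (α : ℕ → σI) (s : ℕ) :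
    A.IsUnboundedBehaviour (A.behaviour (streamBlock α n0 s)) :=
  isUnboundedBehaviour_behaviour (by simpa [streamBlock] using hn0)

lemma occRun_map_range_mul {a : ℕ → Q × Set Q} (ha : a 0 = A.occInit) {α : ℕ → σI}
    {n0 : ℕ} {Y : ℕ → List σO}
    (hY : ∀ j, (Y j).length = n0 ∧ A.occRun (a j) ((streamBlock α n0 j).zip (Y j)) = a (j + 1))
    {v : ℕ → σO} {o : σO} (hv : ∀ t, v t = (Y (t / n0)).getD (t % n0) o) (j : ℕ) :
    A.occRun A.occInit ((range (j * n0)).map fun t => (α t, v t)) = a j := by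
  induction j with
  | zero => simp [ha, occRun]
  | succ j ih =>
    have hYj : (range n0).map (fun r => v (j * n0 + r)) = Y j := by
      refine ext_getElem (by simp [(hY j).1]) fun r h _ => ?_
      have hr : r < n0 := by simpa using h
      have hdiv : (j * n0 + r) / n0 = j := by
        rw [add_comm, Nat.add_mul_div_right _ _ (by omega), Nat.div_eq_of_lt hr, zero_add]
      have hmod : (j * n0 + r) % n0 = r := by
        rw [add_comm, Nat.add_mul_mod_self_right, Nat.mod_eq_of_lt hr]
      rw [getElem_map, getElem_range, hv, hdiv, hmod, getD_eq_getElem]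
    rw [add_one_mul, map_range_add, A.occRun_append, ih, ← (hY j).2, streamBlock, ← hYj,
      zip_map']

end Behaviour

end WDMA

section BlockGame

variable {σI σO Q : Type*}

/-- A winning strategy of Player O in the block game, where Player I plays behaviours of
arbitrarily long words: after seeing block `j + 1`, Player O answers block `j` with a pair
reachable through it. -/
structure BlockStrategy (A : WDMA Q (σI × σO)) where
  state : (ℕ → Behaviour Q) → ℕ → Q × Set Q
  state_congr {β β' : ℕ → Behaviour Q} {j : ℕ} :
    (∀ i ≤ j, β i = β' i) → state β j = state β' j
  state_zero (β : ℕ → Behaviour Q) : state β 0 = A.occInit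
  state_succ_mem {β : ℕ → Behaviour Q} :
    (∀ i, A.IsUnboundedBehaviour (β i)) → ∀ j, state β (j + 1) ∈ β j (state β j)
  iUnion_mem_acc {β : ℕ → Behaviour Q} :
    (∀ i, A.IsUnboundedBehaviour (β i)) → ⋃ j, (state β j).2 ∈ A.acc

/-- The words that replace the blocks when a strategy with lookahead `F` is replayed in the
block game: each one is long enough to supply the lookahead needed on all letters before it. -/
noncomputable def WDMA.reprWord (A : WDMA Q (σI × σO)) (F : ℕ → ℕ) (β : ℕ → Behaviour Q) :
    ℕ → List σI
  | 0 => []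
  | j + 1 => A.reprWord F β j ++ A.longWord (β j) (F (A.reprWord F β j).length)

namespace WDMA

variable {A : WDMA Q (σI × σO)} {F : ℕ → ℕ} {β : ℕ → Behaviour Q}

lemma reprWord_congr {β' : ℕ → Behaviour Q} {j : ℕ} (h : ∀ i < j, β i = β' i) :
    A.reprWord F β j = A.reprWord F β' j := by
  induction j with
  | zero => rfl
  | succ j ih => rw [reprWord, reprWord, ih fun i hi => h i (by omega), h j (by omega)]

lemma le_length_reprWord_succ (hβ : ∀ i, A.IsUnboundedBehaviour (β i)) (j : ℕ) :
    F (A.reprWord F β j).length ≤ (A.reprWord F β (j + 1)).length := by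
  rw [reprWord, length_append]
  exact (le_length_longWord (hβ j) _).trans (Nat.le_add_left _ _)

lemma le_length_reprWord (hβ : ∀ i, A.IsUnboundedBehaviour (β i)) (hF : ∀ n, n < F n)
    (j : ℕ) : j ≤ (A.reprWord F β j).length := by
  induction j with
  | zero => exact Nat.zero_le _
  | succ j ih =>
    exact (Nat.succ_le_succ ih).trans ((hF _).trans_le (le_length_reprWord_succ hβ j))

lemma exists_map_range_eq_reprWord (hβ : ∀ i, A.IsUnboundedBehaviour (β i))
    (hF : ∀ n, n < F n) :
    ∃ α : ℕ → σI, ∀ j, A.reprWord F β j = (range (A.reprWord F β j).length).map α :=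
  exists_map_range_eq_of_isPrefix (fun _ => prefix_append _ _) (le_length_reprWord hβ hF)

lemma occRun_finitePlay_reprWord (hβ : ∀ i, A.IsUnboundedBehaviour (β i))
    (τ : List σI → σO) (hFm : Monotone F) {α : ℕ → σI}
    (hα : ∀ j, A.reprWord F β j = (range (A.reprWord F β j).length).map α) (j : ℕ) :
    A.occRun A.occInit (finitePlay τ F (A.reprWord F β (j + 1)) (A.reprWord F β j).length) =
      A.occRun A.occInit ((range (A.reprWord F β j).length).map (lookaheadPlay τ F α)) := by
  have hle := le_length_reprWord_succ (F := F) hβ j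
  have hlen : (A.reprWord F β j).length ≤ (A.reprWord F β (j + 1)).length :=
    (prefix_append _ _).length_le
  rw [hα (j + 1), finitePlay_map_range τ hlen]
  exact fun t ht => (hFm ht.le).trans hle

end WDMA

namespace BlockStrategy

variable {A : WDMA Q (σI × σO)}

noncomputable def ofLookahead (τ : List σI → σO) (F : ℕ → ℕ) (hF : ∀ n, n < F n)
    (hFm : Monotone F) (hτ : ∀ α, lookaheadPlay τ F α ∈ A.language) : BlockStrategy A where
  state β j :=
    A.occRun A.occInit (finitePlay τ F (A.reprWord F β (j + 1)) (A.reprWord F β j).length)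
  state_congr h := by
    rw [WDMA.reprWord_congr fun i hi => h i (Nat.le_of_lt_succ hi),
      WDMA.reprWord_congr fun i hi => h i hi.le]
  state_zero _ := rfl
  state_succ_mem {β} hβ j := by
    obtain ⟨α, hα⟩ := WDMA.exists_map_range_eq_reprWord hβ hF
    rw [WDMA.occRun_finitePlay_reprWord hβ τ hFm hα, WDMA.occRun_finitePlay_reprWord hβ τ hFm hα,
      ← WDMA.behaviour_longWord (hβ j) (F (A.reprWord F β j).length)]
    set a := (A.reprWord F β j).length
    set x := A.longWord (β j) (F a)
    have hlen : (A.reprWord F β (j + 1)).length = a + x.length := length_append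
    have hx : x = (range x.length).map fun r => α (a + r) := by
      have h := hα (j + 1)
      rw [hlen, map_range_add, ← hα j] at h
      exact append_cancel_left h
    rw [hlen, map_range_add, A.occRun_append]
    refine ⟨(range x.length).map fun r => (lookaheadPlay τ F α (a + r)).2, by simp, ?_⟩
    congr 1
    conv_lhs => arg 1; rw [hx]
    exact zip_map'
  iUnion_mem_acc {β} hβ := by
    obtain ⟨α, hα⟩ := WDMA.exists_map_range_eq_reprWord hβ hF
    simp only [WDMA.occRun_finitePlay_reprWord hβ τ hFm hα]
    rw [A.iUnion_occRun_occInit _ (WDMA.le_length_reprWord hβ hF)]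
    exact hτ α

open Classical in
/-- Letter `t` lies in block `t / n0`; when it is due, the lookahead `2 * n0` has revealed
blocks `t / n0` and `t / n0 + 1`, so Player O can replay the block strategy and spell out an
answer realizing its move on block `t / n0`. -/
noncomputable def toLookahead (S : BlockStrategy A) (n0 : ℕ) (o : σO) (w : List σI) : σO :=
  let t := w.length - 2 * n0
  let β := fun s => A.behaviour (block n0 w s)
  if h : ∃ y : List σO, y.length = n0 ∧
      A.occRun (S.state β (t / n0)) ((block n0 w (t / n0)).zip y) = S.state β (t / n0 + 1)
  then h.choose.getD (t % n0) o else o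

lemma exists_toLookahead_eq [Finite Q] (S : BlockStrategy A) {n0 : ℕ}
    (hn0 : Nat.card (Behaviour Q) < n0) (o : σO) (α : ℕ → σI) :
    ∃ Y : ℕ → List σO,
      (∀ j, (Y j).length = n0 ∧
        A.occRun (S.state (fun s => A.behaviour (streamBlock α n0 s)) j)
          ((streamBlock α n0 j).zip (Y j)) =
          S.state (fun s => A.behaviour (streamBlock α n0 s)) (j + 1)) ∧
      ∀ t, S.toLookahead n0 o ((range (2 * n0 + t)).map α) = (Y (t / n0)).getD (t % n0) o := by
  set β := fun s => A.behaviour (streamBlock α n0 s)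
  have hY : ∀ j, ∃ y : List σO, y.length = n0 ∧
      A.occRun (S.state β j) ((streamBlock α n0 j).zip y) = S.state β (j + 1) := fun j => by
    obtain ⟨y, hy, h⟩ := S.state_succ_mem (WDMA.isUnboundedBehaviour_streamBlock hn0 α) j
    exact ⟨y, hy.trans (by simp [streamBlock]), h⟩
  refine ⟨fun j => (hY j).choose, fun j => (hY j).choose_spec, fun t => ?_⟩
  have hlen : ((range (2 * n0 + t)).map α).length - 2 * n0 = t := by simp
  have hblock : ∀ s ≤ t / n0 + 1,
      block n0 ((range (2 * n0 + t)).map α) s = streamBlock α n0 s :=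
    fun s hs => block_map_range (by nlinarith [Nat.div_mul_le_self t n0])
  have hstate : ∀ j ≤ t / n0 + 1,
      S.state (fun s => A.behaviour (block n0 ((range (2 * n0 + t)).map α) s)) j = S.state β j :=
    fun j hj => S.state_congr fun i hi => by rw [hblock i (hi.trans hj)]
  simp only [toLookahead]
  rw [hlen, hstate _ le_rfl, hstate _ (Nat.le_succ _), hblock _ (Nat.le_succ _), dif_pos (hY _)]

theorem lookaheadPlay_toLookahead_mem [Finite Q] (S : BlockStrategy A) {n0 : ℕ}
    (hn0 : Nat.card (Behaviour Q) < n0) (o : σO) (α : ℕ → σI) :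
    lookaheadPlay (S.toLookahead n0 o) (fun n => 2 * n0 + n) α ∈ A.language := by
  obtain ⟨Y, hY, hτ⟩ := S.exists_toLookahead_eq hn0 o α
  have hacc := S.iUnion_mem_acc (WDMA.isUnboundedBehaviour_streamBlock hn0 α)
  simp only [← A.occRun_map_range_mul (S.state_zero _) hY hτ] at hacc
  rwa [A.iUnion_occRun_occInit _ fun j => Nat.le_mul_of_pos_right j (by omega)] at hacc

end BlockStrategy

end BlockGame

/-- doubly-exponential constant lookahead suffices for delay games with
deterministic weak Muller winning conditions. -/
theorem detWeakMuller_lookahead_upperBound :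
    ∃ c : ℕ, ∀ (k : ℕ) (σI σO Q : Type) (_ : Fintype σI) (_ : Fintype σO)
      (instQ : Fintype Q) (A : WDMA Q (σI × σO)),
      @Fintype.card Q instQ = k →
      ((∃ f : ℕ → ℕ, IsDelay f ∧ IsConstantDelay f ∧ f 0 ≤ 2 ^ 2 ^ (c * k) ∧
          OWins f A.language) ↔
        (∃ g : ℕ → ℕ, IsDelay g ∧ OWins g A.language)) := by
  refine ⟨5, fun k σI σO Q _ _ instQ A hk => ⟨fun ⟨f, hf, _, _, hwin⟩ => ⟨f, hf, hwin⟩, ?_⟩⟩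
  rintro ⟨g, hg, hwin⟩
  obtain ⟨τ, hτ⟩ := (oWins_iff_exists_lookaheadPlay_mem g _).1 hwin
  have : Nonempty Q := ⟨A.init⟩
  let S := BlockStrategy.ofLookahead τ (lookahead g) (lt_lookahead hg) (lookahead_mono g) hτ
  set n0 := Nat.card (Behaviour Q) + 1
  refine ⟨fun i => if i = 0 then 2 * n0 else 1, fun i => ?_, fun i hi => if_neg hi.ne', ?_, ?_⟩
  · dsimp only
    split_ifs <;> omega
  · show 2 * n0 ≤ _
    rw [← hk, ← Nat.card_eq_fintype_card]
    exact two_mul_card_behaviour_succ_le Q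
  · rw [oWins_iff_exists_lookaheadPlay_mem, funext (lookahead_ite_zero _)]
    exact ⟨S.toLookahead n0 (τ []), S.lookaheadPlay_toLookahead_mem (Nat.lt_succ_self _) (τ [])⟩

end DelayGames
end

section
/- For every deterministic weak Muller automaton 𝔄 with k states over an alphabet Σ there exists a deterministic parity automaton 𝔄' with at most k·2^k states and colors in {1,2} such that L(𝔄') = L(𝔄). -/
universe u

namespace DelayGames

/-! The parity automaton runs `A` while recording the set of states visited so far. This set only
grows, so along every run it eventually equals the occurrence set of the run of `A` and stays
there. Coloring a state `2` when its recorded set is accepting and `1` otherwise, all states seen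
infinitely often share the color that decides acceptance by `A`. The states are pairs `(q, S)`,
hence there are `k * 2 ^ k` of them. -/

section Occurrence

variable {Q : Type*}

theorem mem_InfOcc_iff {ρ : ℕ → Q} {q : Q} : q ∈ InfOcc ρ ↔ ∃ᶠ n in Filter.atTop, ρ n = q :=
  Filter.frequently_atTop.symm

theorem InfOcc_nonempty [Finite Q] (ρ : ℕ → Q) : (InfOcc ρ).Nonempty := by
  obtain ⟨q, hq⟩ := Finite.exists_infinite_fiber ρ
  exact ⟨q, mem_InfOcc_iff.2 (Nat.frequently_atTop_iff_infinite.2 (Set.infinite_coe_iff.1 hq))⟩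

theorem InfOcc_subset_of_eventually {ρ : ℕ → Q} {S : Set Q}
    (h : ∀ᶠ n in Filter.atTop, ρ n ∈ S) : InfOcc ρ ⊆ S := fun _ hq =>
  ((mem_InfOcc_iff.1 hq).and_eventually h).exists.elim fun _ ⟨hn, hS⟩ => hn ▸ hS

theorem eventually_image_Iic_eq_range [Finite Q] (ρ : ℕ → Q) :
    ∀ᶠ n in Filter.atTop, ρ '' Set.Iic n = Set.range ρ := by
  have hidx : ∀ q : Set.range ρ, ∃ m, ρ m = q := fun q => q.2
  choose idx hidx using hidx
  obtain ⟨N, hN⟩ := (Set.finite_range idx).bddAbove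
  refine Filter.eventually_atTop.2 ⟨N, fun n hn => ?_⟩
  refine (Set.image_subset_range ρ _).antisymm ?_
  rintro _ ⟨m, rfl⟩
  exact ⟨idx ⟨_, m, rfl⟩, (hN ⟨_, rfl⟩).trans hn, hidx _⟩

end Occurrence

theorem DPA.mem_language_iff_of_color_eq {Q σ : Type*} (A : DPA Q σ) {α : ℕ → σ} {c : ℕ}
    (hne : (InfOcc (A.run α)).Nonempty) (hc : ∀ q ∈ InfOcc (A.run α), A.color q = c) :
    α ∈ A.language ↔ Even c := by
  constructor
  · rintro ⟨q, hq, heven, -⟩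
    exact hc q hq ▸ heven
  · intro heven
    obtain ⟨q, hq⟩ := hne
    exact ⟨q, hq, (hc q hq).symm ▸ heven, fun q' hq' => ((hc q' hq').trans (hc q hq).symm).le⟩

namespace WDMA

variable {Q σ : Type*}

open Classical in
noncomputable def toDPA (A : WDMA Q σ) : DPA (Q × Set Q) σ where
  init := (A.init, {A.init})
  step p a := (A.step p.1 a, insert (A.step p.1 a) p.2)
  color p := if p.2 ∈ A.acc then 2 else 1

open Classical in
theorem toDPA_color (A : WDMA Q σ) (p : Q × Set Q) :
    A.toDPA.color p = if p.2 ∈ A.acc then 2 else 1 :=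
  rfl

theorem toDPA_color_eq_one_or_two (A : WDMA Q σ) (p : Q × Set Q) :
    A.toDPA.color p = 1 ∨ A.toDPA.color p = 2 := by
  rw [toDPA_color]
  split_ifs <;> simp

theorem toDPA_run (A : WDMA Q σ) (α : ℕ → σ) (n : ℕ) :
    A.toDPA.run α n = (A.run α n, A.run α '' Set.Iic n) := by
  induction n with
  | zero => rw [← Nat.bot_eq_zero, Set.Iic_bot, Set.image_singleton]; rfl
  | succ n ih =>
    rw [DPA.run, ih, show Set.Iic (n + 1) = insert (n + 1) (Set.Iic n) from Order.Iic_succ n,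
      Set.image_insert_eq]
    rfl

theorem toDPA_language [Finite Q] (A : WDMA Q σ) : A.toDPA.language = A.language := by
  classical
  ext α
  have hrecord : InfOcc (A.toDPA.run α) ⊆ {p | p.2 = Set.range (A.run α)} :=
    InfOcc_subset_of_eventually <| (eventually_image_Iic_eq_range (A.run α)).mono
      fun n hn => by simpa [toDPA_run] using hn
  have hcolor : ∀ p ∈ InfOcc (A.toDPA.run α),
      A.toDPA.color p = if Set.range (A.run α) ∈ A.acc then 2 else 1 := fun p hp => by
    rw [toDPA_color, hrecord hp]
  rw [A.toDPA.mem_language_iff_of_color_eq (InfOcc_nonempty _) hcolor]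
  split_ifs with hacc <;> simp [WDMA.language, hacc]

end WDMA

/-- every deterministic weak Muller automaton with `k` states has an
equivalent deterministic parity automaton with at most `k * 2 ^ k` states and
colors in `{1, 2}`. -/
theorem wDMA_to_DPA :
    ∀ (Q σ : Type) (instQ : Fintype Q) (A : WDMA Q σ),
      ∃ (Q' : Type) (instQ' : Fintype Q') (A' : DPA Q' σ),
        @Fintype.card Q' instQ' ≤ @Fintype.card Q instQ * 2 ^ @Fintype.card Q instQ ∧
        (∀ q : Q', A'.color q = 1 ∨ A'.color q = 2) ∧
        A'.language = A.language := by
  classical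
  intro Q σ instQ A
  refine ⟨Q × Set Q, inferInstance, A.toDPA, ?_, A.toDPA_color_eq_one_or_two, A.toDPA_language⟩
  rw [Fintype.card_prod, Fintype.card_set]

end DelayGames
end

section
/- For every non-deterministic weak Muller automaton 𝔄 with k states over an alphabet Σ there exists a non-deterministic parity automaton 𝔄' with at most k·2^k states and colors in {1,2} such that L(𝔄') = L(𝔄). -/
universe u

namespace DelayGames

/-!
A run of the parity automaton is a run `ρ` of `A` together with the set of states visited so
far. That set only grows, so on a finite state space it is eventually constant and equal to
`Set.range ρ`; colouring a state `2` when its set is accepting and `1` otherwise makes the run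
eventually monochromatic, with an even colour exactly when `Set.range ρ ∈ A.acc`.
-/

section VisitedUpTo

variable {Q : Type*} (ρ : ℕ → Q)

def visitedUpTo (n : ℕ) : Set Q := ρ '' Set.Iic n

@[simp]
theorem visitedUpTo_zero : visitedUpTo ρ 0 = {ρ 0} := by
  rw [visitedUpTo, ← bot_eq_zero, Set.Iic_bot, Set.image_singleton]

theorem visitedUpTo_succ (n : ℕ) :
    visitedUpTo ρ (n + 1) = insert (ρ (n + 1)) (visitedUpTo ρ n) := by
  rw [visitedUpTo, ← Order.succ_eq_add_one, Order.Iic_succ, Set.image_insert_eq]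
  rfl

theorem visitedUpTo_mono : Monotone (visitedUpTo ρ) :=
  fun _ _ h => Set.image_mono (Set.Iic_subset_Iic.2 h)

theorem exists_visitedUpTo_eq_range [Finite Q] :
    ∃ N, ∀ n, N ≤ n → visitedUpTo ρ n = Set.range ρ := by
  obtain ⟨N, hN⟩ := WellFoundedGT.monotone_chain_condition ⟨visitedUpTo ρ, visitedUpTo_mono ρ⟩
  replace hN : ∀ n, N ≤ n → visitedUpTo ρ N = visitedUpTo ρ n := hN
  have hrange : Set.range ρ ⊆ visitedUpTo ρ N := by
    rintro _ ⟨k, rfl⟩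
    rw [hN (max k N) (le_max_right k N)]
    exact Set.mem_image_of_mem ρ (le_max_left k N)
  refine ⟨N, fun n hn => ?_⟩
  rw [← hN n hn]
  exact (Set.image_subset_range ρ _).antisymm hrange

end VisitedUpTo

section InfOcc

variable {Q : Type*} [Finite Q] (ρ : ℕ → Q)

theorem infOcc_nonempty : (InfOcc ρ).Nonempty := by
  obtain ⟨q, hq⟩ := Finite.exists_infinite_fiber ρ
  refine ⟨q, fun N => ?_⟩
  obtain ⟨n, hn, hNn⟩ := (Set.infinite_coe_iff.mp hq).exists_gt N
  exact ⟨n, hNn.le, hn⟩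

theorem parity_iff_of_eventually_color_eq (color : Q → ℕ) {N k : ℕ}
    (hcolor : ∀ n, N ≤ n → color (ρ n) = k) :
    (∃ q ∈ InfOcc ρ, Even (color q) ∧ ∀ q' ∈ InfOcc ρ, color q' ≤ color q) ↔ Even k := by
  have hinf : ∀ q ∈ InfOcc ρ, color q = k := fun q hq => by
    obtain ⟨n, hn, rfl⟩ := hq N
    exact hcolor n hn
  constructor
  · rintro ⟨q, hq, heven, -⟩
    rwa [← hinf q hq]
  · intro heven
    obtain ⟨q, hq⟩ := infOcc_nonempty ρ
    exact ⟨q, hq, hinf q hq ▸ heven, fun q' hq' => ((hinf q' hq').trans (hinf q hq).symm).le⟩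

end InfOcc

namespace WNMA

variable {Q σ : Type*} (A : WNMA Q σ)

open Classical in
noncomputable def toNPA : NPA (Q × Set Q) σ where
  init := (A.init, {A.init})
  trans := {t | (t.1.1, t.2.1, t.2.2.1) ∈ A.trans ∧ t.2.2.2 = insert t.2.2.1 t.1.2}
  color p := if p.2 ∈ A.acc then 2 else 1

open Classical in
theorem toNPA_color (p : Q × Set Q) : A.toNPA.color p = if p.2 ∈ A.acc then 2 else 1 := rfl

theorem toNPA_color_eq_one_or_two (p : Q × Set Q) :
    A.toNPA.color p = 1 ∨ A.toNPA.color p = 2 := by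
  rw [toNPA_color]
  split_ifs <;> simp

theorem even_toNPA_color_iff (p : Q × Set Q) : Even (A.toNPA.color p) ↔ p.2 ∈ A.acc := by
  rw [toNPA_color]
  split_ifs with h <;> simp [h]

theorem toNPA_parity_iff [Finite Q] (ρ : ℕ → Q) :
    (∃ q ∈ InfOcc (fun n => (ρ n, visitedUpTo ρ n)), Even (A.toNPA.color q) ∧
        ∀ q' ∈ InfOcc (fun n => (ρ n, visitedUpTo ρ n)), A.toNPA.color q' ≤ A.toNPA.color q) ↔
      Set.range ρ ∈ A.acc := by
  obtain ⟨N, hN⟩ := exists_visitedUpTo_eq_range ρ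
  rw [parity_iff_of_eventually_color_eq _ A.toNPA.color (N := N)
    (k := A.toNPA.color (ρ N, Set.range ρ)) fun n hn => by simp only [toNPA_color, hN n hn],
    even_toNPA_color_iff]

theorem snd_eq_visitedUpTo_of_isRun {α : ℕ → σ} {ρ' : ℕ → Q × Set Q}
    (h0 : ρ' 0 = A.toNPA.init) (hstep : ∀ n, (ρ' n, α n, ρ' (n + 1)) ∈ A.toNPA.trans) (n : ℕ) :
    (ρ' n).2 = visitedUpTo (fun n => (ρ' n).1) n := by
  induction n with
  | zero => simp [h0, toNPA]
  | succ n ih => rw [visitedUpTo_succ, ← ih]; exact (hstep n).2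

theorem toNPA_language [Finite Q] : A.toNPA.language = A.language := by
  ext α
  constructor
  · rintro ⟨ρ', h0, hstep, hparity⟩
    have hρ' : ρ' = fun n => ((ρ' n).1, visitedUpTo (fun n => (ρ' n).1) n) :=
      funext fun n => Prod.ext rfl (A.snd_eq_visitedUpTo_of_isRun h0 hstep n)
    rw [hρ', toNPA_parity_iff] at hparity
    exact ⟨fun n => (ρ' n).1, by simp [h0, toNPA], fun n => (hstep n).1, hparity⟩
  · rintro ⟨ρ, h0, hstep, hacc⟩
    exact ⟨fun n => (ρ n, visitedUpTo ρ n), by simp [h0, toNPA],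
      fun n => ⟨hstep n, visitedUpTo_succ ρ n⟩, (A.toNPA_parity_iff ρ).2 hacc⟩

end WNMA

/-- every non-deterministic weak Muller automaton with `k` states has an
equivalent non-deterministic parity automaton with at most `k * 2 ^ k` states and
colors in `{1, 2}`. -/
theorem wNMA_to_NPA :
    ∀ (Q σ : Type) (instQ : Fintype Q) (A : WNMA Q σ),
      ∃ (Q' : Type) (instQ' : Fintype Q') (A' : NPA Q' σ),
        @Fintype.card Q' instQ' ≤ @Fintype.card Q instQ * 2 ^ @Fintype.card Q instQ ∧
        (∀ q : Q', A'.color q = 1 ∨ A'.color q = 2) ∧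
        A'.language = A.language := by
  intro Q σ instQ A
  classical
  refine ⟨Q × Set Q, inferInstance, A.toNPA, ?_, A.toNPA_color_eq_one_or_two, A.toNPA_language⟩
  rw [Fintype.card_prod, Fintype.card_set]

end DelayGames
end

section
/- For every n ≥ 1, every finite word w over Σ_n = {0,…,n−1} with |w| ≥ 2^n contains a bad j-pair for some j ∈ {0,…,n−1}. -/
universe u

namespace DelayGames

/-!
Induction on `n`. If the largest letter `n` occurs twice in `w`, two consecutive occurrences
enclose only smaller letters and form a bad `n`-pair. Otherwise deleting its (at most one)
occurrence splits `w` into at most two factors over `{0, …, n-1}`, one of length at least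
`2 ^ n`, and a bad pair in a factor is a bad pair in `w`.
-/

theorem ListBadPair.of_infix {u w : List ℕ} {j : ℕ} (huw : u <:+: w) (h : ListBadPair u j) :
    ListBadPair w j := by
  obtain ⟨s, t, rfl⟩ := huw
  obtain ⟨p, p', hpp', hp'u, hp, hp', hbetween⟩ := h
  have hget : ∀ q < u.length, (s ++ u ++ t).getD (s.length + q) 0 = u.getD q 0 := by
    intro q hq
    simp [List.getD_eq_getElem?_getD, List.getElem?_append_left, List.getElem?_append_right, hq]
  refine ⟨s.length + p, s.length + p', by omega, by simp only [List.length_append]; omega,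
    by rw [hget p (by omega), hp], by rw [hget p' hp'u, hp'], fun q hpq hqp' => ?_⟩
  obtain ⟨q, rfl⟩ := Nat.exists_eq_add_of_le (show s.length ≤ q by omega)
  rw [hget q (by omega)]
  exact hbetween q (by omega) (by omega)

theorem listBadPair_cons_append_singleton {x : List ℕ} {j : ℕ} (hx : ∀ a ∈ x, a < j) :
    ListBadPair (j :: (x ++ [j])) j := by
  refine ⟨0, x.length + 1, by omega, by simp, by simp, by simp, fun q hq hqx => ?_⟩
  obtain ⟨q, rfl⟩ := Nat.exists_eq_add_of_lt hq
  simp only [zero_add, List.getD_cons_succ]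
  rw [List.getD_append _ _ _ _ (by omega), List.getD_eq_getElem _ _ (by omega)]
  exact hx _ (List.getElem_mem _)

theorem exists_listBadPair_of_length_ge (n : ℕ) :
    ∀ w : List ℕ, (∀ a ∈ w, a < n) → 2 ^ n ≤ w.length → ∃ j < n, ListBadPair w j := by
  induction n with
  | zero =>
    intro w hw hlen
    obtain ⟨a, ha⟩ := List.exists_mem_of_length_pos hlen
    exact absurd (hw a ha) (Nat.not_lt_zero a)
  | succ n ih =>
    intro w hw hlen
    have factor_lt {x : List ℕ} (hxw : x <:+: w) (hnx : n ∉ x) : ∀ a ∈ x, a < n :=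
      fun a ha =>
        (Nat.lt_succ_iff.mp (hw a (hxw.subset ha))).lt_of_ne (ne_of_mem_of_not_mem ha hnx)
    have exists_of_factor {x : List ℕ} (hxw : x <:+: w) (hnx : n ∉ x) (hx : 2 ^ n ≤ x.length) :
        ∃ j < n + 1, ListBadPair w j :=
      let ⟨j, hj, hbad⟩ := ih x (factor_lt hxw hnx) hx
      ⟨j, hj.trans n.lt_succ_self, hbad.of_infix hxw⟩
    by_cases hn : n ∈ w
    swap
    · exact exists_of_factor (List.infix_refl w) hn (by rw [pow_succ] at hlen; omega)
    obtain ⟨u, v, rfl, hnu⟩ := List.eq_append_cons_of_mem hn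
    by_cases hnv : n ∈ v
    · obtain ⟨x, y, rfl, hnx⟩ := List.eq_append_cons_of_mem hnv
      have hx : ∀ a ∈ x, a < n := factor_lt ⟨u ++ [n], n :: y, by simp⟩ hnx
      exact ⟨n, n.lt_succ_self,
        (listBadPair_cons_append_singleton hx).of_infix ⟨u, y, by simp⟩⟩
    · have hlong : 2 ^ n ≤ u.length ∨ 2 ^ n ≤ v.length := by
        simp only [List.length_append, List.length_cons, pow_succ] at hlen; omega
      rcases hlong with hu | hv
      · exact exists_of_factor ⟨[], n :: v, by simp⟩ hnu hu
      · exact exists_of_factor ⟨u ++ [n], [], by simp⟩ hnv hv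

/-- every word over `{0, …, n-1}` of length at least `2 ^ n` contains a
bad `j`-pair for some `j < n`. -/
theorem badPair_exists_of_long :
    ∀ n : ℕ, 1 ≤ n → ∀ w : List ℕ, (∀ a ∈ w, a < n) →
      2 ^ n ≤ w.length → ∃ j < n, ListBadPair w j :=
  fun n _ => exists_listBadPair_of_length_ge n

end DelayGames
end

section
/- For every n ≥ 1, there exists a finite word w over Σ_n = {0,…,n−1} with |w| = 2^n − 1 that contains no bad j-pair for any j ∈ {0,…,n−1}. -/
universe u

namespace DelayGames

/-!
The word is the ruler sequence `w₀ = ε`, `wₙ₊₁ = wₙ n wₙ`, of length `2ⁿ - 1`. A bad `j`-pair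
of `wₙ₊₁` cannot straddle the central letter `n` (it would need `n < j`, but all letters are
`≤ n`), nor use it (the letter `n` occurs only once), so it lies in one of the copies of `wₙ`.
-/

theorem ListBadPair.mem {w : List ℕ} {j : ℕ} (h : ListBadPair w j) : j ∈ w := by
  obtain ⟨p, p', hpp', hp'len, hp, -⟩ := h
  rw [← hp, List.getD_eq_getElem _ _ (by omega)]
  exact List.getElem_mem _

theorem ListBadPair.of_append_cons {u v : List ℕ} {m j : ℕ} (h : ListBadPair (u ++ m :: v) j) :
    ListBadPair u j ∨ ListBadPair v j ∨ m < j ∨ m = j ∧ (j ∈ u ∨ j ∈ v) := by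
  obtain ⟨p, p', hpp', hp'len, hp, hp', hbetween⟩ := h
  set L := u.length with hL
  simp only [List.length_append, List.length_cons] at hp'len
  have getD_left : ∀ q < L, (u ++ m :: v).getD q 0 = u.getD q 0 := fun q hq =>
    List.getD_append u _ 0 q hq
  have getD_mid : (u ++ m :: v).getD L 0 = m := by
    simp [hL]
  have getD_right : ∀ q, (u ++ m :: v).getD (L + 1 + q) 0 = v.getD q 0 := fun q => by
    rw [List.getD_append_right u _ 0 _ (by omega), show L + 1 + q - L = q + 1 by omega]
    simp
  have mem_left : p < L → j ∈ u := fun hp_lt => by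
    rw [← hp, getD_left p hp_lt, List.getD_eq_getElem _ _ hp_lt]
    exact List.getElem_mem _
  have mem_right : L < p' → j ∈ v := fun hp'_gt => by
    obtain ⟨q, rfl⟩ : ∃ q, p' = L + 1 + q := ⟨p' - L - 1, by omega⟩
    rw [← hp', getD_right, List.getD_eq_getElem _ _ (by omega)]
    exact List.getElem_mem _
  rcases lt_trichotomy p' L with hp'_lt | rfl | hp'_gt
  · refine .inl ⟨p, p', hpp', hp'_lt, ?_, ?_, fun q hpq hqp' => ?_⟩
    · rwa [← getD_left p (by omega)]
    · rwa [← getD_left p' hp'_lt]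
    · rw [← getD_left q (by omega)]
      exact hbetween q hpq hqp'
  · exact .inr <| .inr <| .inr ⟨getD_mid ▸ hp', .inl (mem_left hpp')⟩
  rcases lt_trichotomy p L with hp_lt | rfl | hp_gt
  · exact .inr <| .inr <| .inl (getD_mid ▸ hbetween L hp_lt hp'_gt)
  · exact .inr <| .inr <| .inr ⟨getD_mid ▸ hp, .inr (mem_right hp'_gt)⟩
  obtain ⟨q, rfl⟩ : ∃ q, p = L + 1 + q := ⟨p - L - 1, by omega⟩
  obtain ⟨q', rfl⟩ : ∃ q', p' = L + 1 + q' := ⟨p' - L - 1, by omega⟩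
  refine .inr <| .inl ⟨q, q', by omega, by omega, getD_right q ▸ hp, getD_right q' ▸ hp',
    fun r hqr hrq' => ?_⟩
  rw [← getD_right]
  exact hbetween _ (by omega) (by omega)

def ruler : ℕ → List ℕ
  | 0 => []
  | n + 1 => ruler n ++ n :: ruler n

theorem length_ruler (n : ℕ) : (ruler n).length = 2 ^ n - 1 := by
  induction n with
  | zero => rfl
  | succ n ih =>
    have : 1 ≤ 2 ^ n := Nat.one_le_two_pow
    simp only [ruler, List.length_append, List.length_cons, ih, pow_succ]
    omega

theorem lt_of_mem_ruler {n a : ℕ} (h : a ∈ ruler n) : a < n := by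
  induction n with
  | zero => simp [ruler] at h
  | succ n ih =>
    simp only [ruler, List.mem_append, List.mem_cons] at h
    rcases h with h | rfl | h
    · exact (ih h).trans (Nat.lt_succ_self n)
    · exact Nat.lt_succ_self a
    · exact (ih h).trans (Nat.lt_succ_self n)

theorem not_listBadPair_ruler (n j : ℕ) : ¬ ListBadPair (ruler n) j := by
  induction n with
  | zero => exact fun h => by simpa [ruler] using h.mem
  | succ n ih =>
    intro h
    have hj : j < n + 1 := lt_of_mem_ruler h.mem
    rcases ListBadPair.of_append_cons h with h | h | hnj | ⟨rfl, h | h⟩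
    · exact ih h
    · exact ih h
    · omega
    · exact (lt_of_mem_ruler h).false
    · exact (lt_of_mem_ruler h).false

/-- there is a word over `{0, …, n-1}` of length `2 ^ n - 1` without any
bad `j`-pair. -/
theorem badPair_free_word_exists :
    ∀ n : ℕ, 1 ≤ n → ∃ w : List ℕ, (∀ a ∈ w, a < n) ∧
      w.length = 2 ^ n - 1 ∧ ∀ j < n, ¬ ListBadPair w j :=
  fun n _ => ⟨ruler n, fun _ => lt_of_mem_ruler, length_ruler n,
    fun j _ => not_listBadPair_ruler n j⟩

end DelayGames
end

section
/- For every n ≥ 1, the deterministic weak Muller automaton 𝔓_n recognizes exactly P_n, i.e., L(𝔓_n) = P_n, where 𝔓_n is the complete deterministic automaton over the alphabet Σ_n × Σ_n with state set {q_I, q_f} ∪ {s_j, t_j : j ∈ Σ_n}, initial state q_I, transitions: from q_I on any letter (a, b) go to s_b; from s_j on (a, b) go to t_j if a = j and stay in s_j if a ≠ j; from t_j on (a, b) stay in t_j if a < j, go to s_j if a > j, and go to q_f if a = j; from q_f every letter loops on q_f; and with weak Muller family 𝓕 = {F_0,…,F_{n−1}} where F_j = {q_I, q_f, s_j, t_j};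 and where P_n ⊆ (Σ_n × Σ_n)^ω contains a word (α, β) if and only if the suffix α(1)α(2)⋯ contains a bad β(0)-pair. -/
universe u

namespace DelayGames

/-- The states of the automaton `𝔓_n`. -/
inductive PState (n : ℕ) : Type where
  | qI : PState n
  | qf : PState n
  | s : Fin n → PState n
  | t : Fin n → PState n

/-- The transition function of `𝔓_n`. -/
def pStep (n : ℕ) : PState n → (Fin n × Fin n) → PState n
  | .qI, (_, b) => .s b
  | .s j, (a, _) => if a = j then .t j else .s j
  | .t j, (a, _) =>
      if (a : ℕ) < (j : ℕ) then .t j else if a = j then .qf else .s j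
  | .qf, _ => .qf

/-- The deterministic weak Muller automaton `𝔓_n` with family
`𝓕 = {F_j : j ∈ Σ_n}`, `F_j = {q_I, q_f, s_j, t_j}`. -/
def PAut (n : ℕ) : WDMA (PState n) (Fin n × Fin n) where
  init := .qI
  step := pStep n
  acc := {F | ∃ j : Fin n,
    F = ({PState.qI, PState.qf, PState.s j, PState.t j} : Set (PState n))}

/-! After reading `(a, b)` the automaton sits in `s_j` with `j = b` and never leaves
`{s_j, t_j, q_f}` again. It is in `t_j` exactly when the last letter `≥ j` read so far
is a `j`, so it enters the sink `q_f` exactly at the second position of the first bad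
`j`-pair. As `q_f` can only be entered from `t_j`, the occurrence set is `F_j` iff `q_f`
is visited. -/

namespace PAut

variable {n : ℕ}

@[simp]
lemma pStep_qI (x : Fin n × Fin n) : pStep n .qI x = .s x.2 := rfl

@[simp]
lemma pStep_qf (x : Fin n × Fin n) : pStep n .qf x = .qf := rfl

lemma pStep_s (j : Fin n) (x : Fin n × Fin n) :
    pStep n (.s j) x = if x.1 = j then .t j else .s j := rfl

lemma pStep_t (j : Fin n) (x : Fin n × Fin n) :
    pStep n (.t j) x =
      if (x.1 : ℕ) < j then .t j else if x.1 = j then .qf else .s j := rfl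

variable (w : ℕ → Fin n × Fin n)

@[simp]
lemma run_zero : (PAut n).run w 0 = .qI := rfl

lemma run_succ (k : ℕ) : (PAut n).run w (k + 1) = pStep n ((PAut n).run w k) (w k) := rfl

@[simp]
lemma run_one : (PAut n).run w 1 = .s (w 0).2 := rfl

lemma run_succ_eq_s_or_t_or_qf (k : ℕ) :
    (PAut n).run w (k + 1) = .s (w 0).2 ∨ (PAut n).run w (k + 1) = .t (w 0).2 ∨
      (PAut n).run w (k + 1) = .qf := by
  induction k with
  | zero => exact Or.inl (run_one w)
  | succ k ih =>
    rw [run_succ]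
    rcases ih with h | h | h <;> rw [h]
    · rw [pStep_s]; split_ifs <;> simp
    · rw [pStep_t]; split_ifs <;> simp
    · simp

lemma exists_last_eq_of_run_eq_t {k : ℕ} (hk : (PAut n).run w (k + 1) = .t (w 0).2) :
    ∃ p < k, ((w (p + 1)).1 : ℕ) = (w 0).2 ∧
      ∀ q, p < q → q < k → ((w (q + 1)).1 : ℕ) < (w 0).2 := by
  induction k with
  | zero => simp at hk
  | succ k ih =>
    rw [run_succ] at hk
    rcases run_succ_eq_s_or_t_or_qf w k with h | h | h <;> rw [h] at hk
    · rw [pStep_s] at hk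
      split_ifs at hk with hj
      exact ⟨k, k.lt_succ_self, congrArg Fin.val hj, fun q hq hq' => by omega⟩
    · rw [pStep_t] at hk
      split_ifs at hk with hlt
      obtain ⟨p, hpk, hp, hbetween⟩ := ih h
      refine ⟨p, by omega, hp, fun q hpq hqk => ?_⟩
      rcases Nat.lt_succ_iff_lt_or_eq.mp hqk with hqk | rfl
      · exact hbetween q hpq hqk
      · exact hlt
    · simp at hk

lemma exists_run_eq_t_of_run_eq_qf {m : ℕ} (hm : (PAut n).run w m = .qf) :
    ∃ k, (PAut n).run w (k + 1) = .t (w 0).2 ∧ (w (k + 1)).1 = (w 0).2 := by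
  induction m with
  | zero => simp at hm
  | succ m ih =>
    rw [run_succ] at hm
    cases m with
    | zero => simp at hm
    | succ k =>
      rcases run_succ_eq_s_or_t_or_qf w k with h | h | h <;> rw [h] at hm
      · rw [pStep_s] at hm
        split_ifs at hm
      · rw [pStep_t] at hm
        split_ifs at hm with hlt hj
        exact ⟨k, h, hj⟩
      · exact ih h

lemma infBadPair_of_run_eq_qf {m : ℕ} (hm : (PAut n).run w m = .qf) :
    InfBadPair (fun k => ((w (k + 1)).1 : ℕ)) (w 0).2 := by
  obtain ⟨k, hk, hj⟩ := exists_run_eq_t_of_run_eq_qf w hm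
  obtain ⟨p, hpk, hp, hbetween⟩ := exists_last_eq_of_run_eq_t w hk
  exact ⟨p, k, hpk, hp, congrArg Fin.val hj, hbetween⟩

lemma run_eq_t_of_forall_lt {p p' : ℕ} (hpp' : p < p')
    (hp : (PAut n).run w (p + 2) = .t (w 0).2)
    (hbetween : ∀ q, p < q → q < p' → ((w (q + 1)).1 : ℕ) < (w 0).2) :
    (PAut n).run w (p' + 1) = .t (w 0).2 := by
  induction p', hpp' using Nat.le_induction with
  | base => exact hp
  | succ p' hpp' ih =>
    rw [run_succ, ih fun q hpq hqp' => hbetween q hpq (by omega), pStep_t,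
      if_pos (hbetween p' hpp' p'.lt_succ_self)]

lemma exists_run_eq_qf_of_infBadPair
    (h : InfBadPair (fun k => ((w (k + 1)).1 : ℕ)) (w 0).2) :
    ∃ m, (PAut n).run w m = .qf := by
  obtain ⟨p, p', hpp', hp, hp', hbetween⟩ := h
  have hp : (w (p + 1)).1 = (w 0).2 := Fin.ext hp
  have hp' : (w (p' + 1)).1 = (w 0).2 := Fin.ext hp'
  have read_j_in_t {k : ℕ} (hk : (PAut n).run w (k + 1) = .t (w 0).2)
      (hj : (w (k + 1)).1 = (w 0).2) : (PAut n).run w (k + 2) = .qf := by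
    rw [run_succ, hk, pStep_t, if_neg (by simp [hj]), if_pos hj]
  rcases run_succ_eq_s_or_t_or_qf w p with hs | ht | hf
  · have ht : (PAut n).run w (p + 2) = .t (w 0).2 := by
      rw [run_succ, hs, pStep_s, if_pos hp]
    exact ⟨p' + 2, read_j_in_t (run_eq_t_of_forall_lt w hpp' ht hbetween) hp'⟩
  · exact ⟨p + 2, read_j_in_t ht hp⟩
  · exact ⟨p + 1, hf⟩

lemma range_run_mem_acc_iff :
    Set.range ((PAut n).run w) ∈ (PAut n).acc ↔ PState.qf ∈ Set.range ((PAut n).run w) := by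
  refine ⟨fun ⟨j, hj⟩ => hj ▸ by simp, fun ⟨mf, hmf⟩ => ⟨(w 0).2, ?_⟩⟩
  obtain ⟨mt, hmt, -⟩ := exists_run_eq_t_of_run_eq_qf w hmf
  refine Set.Subset.antisymm ?_ ?_
  · rintro _ ⟨_ | k, rfl⟩
    · simp
    · rcases run_succ_eq_s_or_t_or_qf w k with h | h | h <;> simp [h]
  · rintro _ (rfl | rfl | rfl | rfl)
    exacts [⟨0, rfl⟩, ⟨mf, hmf⟩, ⟨1, rfl⟩, ⟨mt + 1, hmt⟩]

end PAut

/-- the automaton `𝔓_n` recognizes exactly `P n`. -/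
theorem PAut_language :
    ∀ n : ℕ, 1 ≤ n → (PAut n).language = P n := by
  intro n _
  ext w
  change Set.range ((PAut n).run w) ∈ (PAut n).acc ↔ _
  rw [PAut.range_run_mem_acc_iff]
  exact ⟨fun ⟨_, hm⟩ => PAut.infBadPair_of_run_eq_qf w hm,
    PAut.exists_run_eq_qf_of_infBadPair w⟩

end DelayGames
end
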